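/- arXiv:2008.09410 — 3 statements merged into one kernel-verified Lean document; each statement's English description precedes it below -/
import Mathlib

section
/- Let φ : [a,b] → ℝ be C² with |φ′(t)| ≥ λ > 0 for all t ∈ [a,b] and φ′ monotone on [a,b], and let η : [a,b] → ℂ satisfy |η(t)| ≤ 1 and |η′(t)| ≤ M. Then |∫ₐᵇ η(t) e^{iμφ(t)} dt| ≤ C(1 + M(b−a))/(μλ) for all μ > 0, where C is an absolute constant. -/
/-!
Write `e = exp (i μ φ)`. Integrating `e = e' / (i μ φ')` by parts, each partial integral
`∫ₐˣ e` is bounded by `4 / (μ λ)`: the boundary terms give `2 / (μ λ)`, and since `φ'` is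
monotone and does not vanish, `1 / φ'` is monotone, so its total variation is
`|1/φ'(x) - 1/φ'(a)| ≤ 2 / λ`. A second integration by parts, against `η` and the primitive of
`e`, turns this into the bound `(4 / (μ λ)) (‖η a‖ + ‖η b‖ + ∫ ‖η'‖) ≤ 8 (1 + M (b - a)) / (μ λ)`.
-/

open Real Complex intervalIntegral Set

open MeasureTheory Topology

section

variable {a b : ℝ}

theorem ContDiffOn.hasDerivAt_derivWithin_Icc {E : Type*} [NormedAddCommGroup E] [NormedSpace ℝ E]
    {f : ℝ → E} {n : WithTop ℕ∞} (hf : ContDiffOn ℝ n f (Icc a b)) (hn : n ≠ 0) {t : ℝ}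
    (ht : t ∈ Ioo a b) : HasDerivAt f (derivWithin f (Icc a b) t) t := by
  have hmem : Icc a b ∈ 𝓝 t := Icc_mem_nhds ht.1 ht.2
  rw [derivWithin_of_mem_nhds hmem]
  exact ((hf.differentiableOn hn).differentiableAt hmem).hasDerivAt

theorem ContinuousOn.hasDerivAt_integral_of_mem_Ioo {E : Type*} [NormedAddCommGroup E]
    [NormedSpace ℝ E] [CompleteSpace E] {f : ℝ → E} (hf : ContinuousOn f (Icc a b)) {t : ℝ}
    (ht : t ∈ Ioo a b) : HasDerivAt (fun x => ∫ s in a..x, f s) (f t) t :=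
  integral_hasDerivAt_right
    ((hf.mono (Icc_subset_Icc_right ht.2.le)).intervalIntegrable_of_Icc ht.1.le)
    ((hf.mono Ioo_subset_Icc_self).stronglyMeasurableAtFilter isOpen_Ioo t ht)
    ((hf t (Ioo_subset_Icc_self ht)).continuousAt (Icc_mem_nhds ht.1 ht.2))

theorem norm_integral_mul_deriv_le {A : Type*} [NormedRing A] [NormedAlgebra ℝ A] [CompleteSpace A]
    {u u' v v' : ℝ → A} {K : ℝ} (hab : a ≤ b)
    (hu : ContinuousOn u (Icc a b)) (hv : ContinuousOn v (Icc a b))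
    (huu' : ∀ x ∈ Ioo a b, HasDerivAt u (u' x) x) (hvv' : ∀ x ∈ Ioo a b, HasDerivAt v (v' x) x)
    (hu' : IntervalIntegrable u' volume a b) (hv' : IntervalIntegrable v' volume a b)
    (hvK : ∀ x ∈ Icc a b, ‖v x‖ ≤ K) :
    ‖∫ x in a..b, u x * v' x‖ ≤ K * (‖u a‖ + ‖u b‖ + ∫ x in a..b, ‖u' x‖) := by
  have hmul : ∀ w : A, ∀ x ∈ Icc a b, ‖w * v x‖ ≤ ‖w‖ * K := fun w x hx =>
    (norm_mul_le _ _).trans (mul_le_mul_of_nonneg_left (hvK x hx) (norm_nonneg _))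
  have hrem : ‖∫ x in a..b, u' x * v x‖ ≤ K * ∫ x in a..b, ‖u' x‖ := calc
    ‖∫ x in a..b, u' x * v x‖ ≤ ∫ x in a..b, ‖u' x * v x‖ := norm_integral_le_integral_norm hab
    _ ≤ ∫ x in a..b, ‖u' x‖ * K :=
      integral_mono_on hab (hu'.mul_continuousOn (by rwa [uIcc_of_le hab])).norm
        (hu'.norm.mul_const K) fun x hx => hmul _ x hx
    _ = K * ∫ x in a..b, ‖u' x‖ := by rw [intervalIntegral.integral_mul_const, mul_comm]
  rw [integral_mul_deriv_eq_deriv_mul_of_hasDerivAt (by rwa [uIcc_of_le hab])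
    (by rwa [uIcc_of_le hab]) (by rwa [min_eq_left hab, max_eq_right hab])
    (by rwa [min_eq_left hab, max_eq_right hab]) hu' hv']
  calc ‖u b * v b - u a * v a - ∫ x in a..b, u' x * v x‖
      ≤ ‖u b * v b‖ + ‖u a * v a‖ + ‖∫ x in a..b, u' x * v x‖ :=
        norm_sub_le_of_le (norm_sub_le _ _) le_rfl
    _ ≤ ‖u b‖ * K + ‖u a‖ * K + K * ∫ x in a..b, ‖u' x‖ := by
      gcongr
      exacts [hmul _ b (right_mem_Icc.2 hab), hmul _ a (left_mem_Icc.2 hab)]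
    _ = K * (‖u a‖ + ‖u b‖ + ∫ x in a..b, ‖u' x‖) := by ring

theorem integral_abs_eq_abs_sub_of_hasDerivAt {g g' : ℝ → ℝ} (hab : a ≤ b)
    (hg : ContinuousOn g (Icc a b)) (hgg' : ∀ x ∈ Ioo a b, HasDerivAt g (g' x) x)
    (hg' : IntervalIntegrable g' volume a b)
    (hsign : (∀ x ∈ Ioo a b, 0 ≤ g' x) ∨ ∀ x ∈ Ioo a b, g' x ≤ 0) :
    ∫ x in a..b, |g' x| = |g b - g a| := by
  have hnonneg : 0 ≤ ∫ x in a..b, |g' x| := integral_nonneg hab fun x _ => abs_nonneg _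
  rcases hsign with hpos | hneg
  · have hFTC : ∫ x in a..b, |g' x| = g b - g a :=
      integral_eq_sub_of_hasDerivAt_of_le hab hg
        (fun x hx => by rw [abs_of_nonneg (hpos x hx)]; exact hgg' x hx) hg'.abs
    rw [hFTC, abs_of_nonneg (hFTC ▸ hnonneg)]
  · have hFTC : ∫ x in a..b, |g' x| = -g b - -g a :=
      integral_eq_sub_of_hasDerivAt_of_le hab hg.neg
        (fun x hx => by rw [abs_of_nonpos (hneg x hx)]; exact (hgg' x hx).neg) hg'.abs
    rw [hFTC, abs_of_nonpos (by linarith)]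
    ring

theorem norm_integral_cexp_le {lam μ : ℝ} {φ ψ σ : ℝ → ℝ} (hab : a ≤ b) (hlam : 0 < lam)
    (hμ : 0 < μ) (hφ : ContinuousOn φ (Icc a b)) (hψ : ContinuousOn ψ (Icc a b))
    (hσ : ContinuousOn σ (Icc a b)) (hφψ : ∀ t ∈ Ioo a b, HasDerivAt φ (ψ t) t)
    (hψσ : ∀ t ∈ Ioo a b, HasDerivAt ψ (σ t) t) (hψlam : ∀ t ∈ Icc a b, lam ≤ |ψ t|)
    (hψmono : MonotoneOn ψ (Ioo a b) ∨ AntitoneOn ψ (Ioo a b)) :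
    ‖∫ t in a..b, Complex.exp (Complex.I * (μ * φ t))‖ ≤ 4 / (μ * lam) := by
  have hμψ : ∀ t ∈ Icc a b, μ * ψ t ≠ 0 := fun t ht =>
    mul_ne_zero hμ.ne' (abs_pos.1 (hlam.trans_le (hψlam t ht)))
  set w : ℝ → ℝ := fun t => (μ * ψ t)⁻¹
  set w' : ℝ → ℝ := fun t => -(μ * σ t) / (μ * ψ t) ^ 2
  have hw : ∀ t ∈ Icc a b, |w t| ≤ (μ * lam)⁻¹ := fun t ht => by
    rw [abs_inv, abs_mul, abs_of_pos hμ]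
    exact inv_anti₀ (mul_pos hμ hlam) (mul_le_mul_of_nonneg_left (hψlam t ht) hμ.le)
  have hwc : ContinuousOn w (Icc a b) := (continuousOn_const.mul hψ).inv₀ hμψ
  have hw'c : ContinuousOn w' (Icc a b) :=
    (continuousOn_const.mul hσ).neg.div ((continuousOn_const.mul hψ).pow 2)
      fun t ht => pow_ne_zero 2 (hμψ t ht)
  have hww' : ∀ t ∈ Ioo a b, HasDerivAt w (w' t) t := fun t ht =>
    ((hψσ t ht).const_mul μ).inv (hμψ t (Ioo_subset_Icc_self ht))
  have hσsign : (∀ t ∈ Ioo a b, 0 ≤ σ t) ∨ ∀ t ∈ Ioo a b, σ t ≤ 0 := by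
    have hσ_eq : ∀ t ∈ Ioo a b, σ t = derivWithin ψ (Ioo a b) t := fun t ht => by
      rw [derivWithin_of_isOpen isOpen_Ioo ht, (hψσ t ht).deriv]
    refine hψmono.imp (fun hm t ht => ?_) (fun hm t ht => ?_) <;> rw [hσ_eq t ht]
    exacts [hm.derivWithin_nonneg, hm.derivWithin_nonpos]
  have hw'sign : (∀ t ∈ Ioo a b, 0 ≤ w' t) ∨ ∀ t ∈ Ioo a b, w' t ≤ 0 := by
    refine hσsign.symm.imp (fun h t ht => ?_) (fun h t ht => ?_)
    · exact div_nonneg (neg_nonneg.2 (mul_nonpos_of_nonneg_of_nonpos hμ.le (h t ht))) (sq_nonneg _)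
    · exact div_nonpos_of_nonpos_of_nonneg (neg_nonpos.2 (mul_nonneg hμ.le (h t ht))) (sq_nonneg _)
  have hvar : ∫ t in a..b, |w' t| ≤ 2 * (μ * lam)⁻¹ := by
    rw [integral_abs_eq_abs_sub_of_hasDerivAt hab hwc hww' (hw'c.intervalIntegrable_of_Icc hab)
      hw'sign]
    linarith [abs_sub (w b) (w a), hw b (right_mem_Icc.2 hab), hw a (left_mem_Icc.2 hab)]
  set e : ℝ → ℂ := fun t => Complex.exp (Complex.I * (μ * φ t))
  -- `e = u e'` with the amplitude `u = 1 / (i μ ψ) = -i w`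
  have hee' : ∀ t ∈ Ioo a b, HasDerivAt e (e t * (Complex.I * (μ * ψ t))) t := fun t ht =>
    (((hφψ t ht).ofReal_comp.const_mul (μ : ℂ)).const_mul Complex.I).cexp
  have hecont : ContinuousOn e (Icc a b) := by fun_prop
  have hIBP := norm_integral_mul_deriv_le (u := fun t => -Complex.I * w t)
    (u' := fun t => -Complex.I * w' t) (K := 1) hab (by fun_prop) hecont
    (fun t ht => ((hww' t ht).ofReal_comp.const_mul _)) hee'
    (ContinuousOn.intervalIntegrable_of_Icc hab (by fun_prop))
    (ContinuousOn.intervalIntegrable_of_Icc hab (by fun_prop))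
    (fun t _ => by simp [e, Complex.norm_exp])
  have hint : ∫ t in a..b, e t =
      ∫ t in a..b, -Complex.I * w t * (e t * (Complex.I * (μ * ψ t))) := by
    refine integral_congr fun t ht => ?_
    rw [uIcc_of_le hab] at ht
    obtain ⟨hμ0, hψ0⟩ := mul_ne_zero_iff.1 (hμψ t ht)
    have hμ0' : (μ : ℂ) ≠ 0 := by exact_mod_cast hμ0
    have hψ0' : (ψ t : ℂ) ≠ 0 := by exact_mod_cast hψ0
    simp only [w]
    push_cast
    field_simp
    rw [Complex.I_sq]
    ring
  have hnorm : ∀ x : ℝ, ‖-Complex.I * x‖ = |x| := fun x => by simp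
  rw [hint]
  refine hIBP.trans ?_
  simp only [hnorm, one_mul]
  linarith [hw a (left_mem_Icc.2 hab), hw b (right_mem_Icc.2 hab), div_eq_mul_inv 4 (μ * lam)]

theorem norm_integral_cexp_le_of_contDiffOn {lam μ : ℝ} {φ : ℝ → ℝ} (hab : a < b) (hlam : 0 < lam)
    (hμ : 0 < μ) (hφ : ContDiffOn ℝ 2 φ (Icc a b)) (hφ' : ∀ t ∈ Ioo a b, lam ≤ |deriv φ t|)
    (hmono : MonotoneOn (deriv φ) (Ioo a b) ∨ AntitoneOn (deriv φ) (Ioo a b)) {x : ℝ}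
    (hx : x ∈ Icc a b) :
    ‖∫ t in a..x, Complex.exp (Complex.I * (μ * φ t))‖ ≤ 4 / (μ * lam) := by
  have hUD : UniqueDiffOn ℝ (Icc a b) := uniqueDiffOn_Icc hab
  set ψ := derivWithin φ (Icc a b)
  have hψφ : EqOn (deriv φ) ψ (Ioo a b) := fun t ht =>
    (derivWithin_of_mem_nhds (Icc_mem_nhds ht.1 ht.2)).symm
  have hψ : ContDiffOn ℝ 1 ψ (Icc a b) := hφ.derivWithin hUD (by norm_num)
  have hψlam : ∀ t ∈ Icc a b, lam ≤ |ψ t| := by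
    rw [← closure_Ioo hab.ne] at hψ ⊢
    exact le_on_closure (fun t ht => hψφ ht ▸ hφ' t ht) continuousOn_const hψ.continuousOn.abs
  have hIcc : Icc a x ⊆ Icc a b := Icc_subset_Icc_right hx.2
  have hIoo : Ioo a x ⊆ Ioo a b := Ioo_subset_Ioo_right hx.2
  exact norm_integral_cexp_le hx.1 hlam hμ (hφ.continuousOn.mono hIcc)
    (hψ.continuousOn.mono hIcc) ((hψ.continuousOn_derivWithin hUD le_rfl).mono hIcc)
    (fun t ht => hφ.hasDerivAt_derivWithin_Icc two_ne_zero (hIoo ht))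
    (fun t ht => hψ.hasDerivAt_derivWithin_Icc one_ne_zero (hIoo ht))
    (fun t ht => hψlam t (hIcc ht))
    (hmono.imp (fun h => (h.congr hψφ).mono hIoo) (fun h => (h.congr hψφ).mono hIoo))

theorem norm_integral_mul_le_of_norm_primitive_le {A : Type*} [NormedRing A] [NormedAlgebra ℝ A]
    [CompleteSpace A] {K M : ℝ} {η f : ℝ → A} (hab : a < b) (hη : ContDiffOn ℝ 1 η (Icc a b))
    (hf : ContinuousOn f (Icc a b)) (hη1 : ∀ t ∈ Icc a b, ‖η t‖ ≤ 1)
    (hηM : ∀ t ∈ Ioo a b, ‖deriv η t‖ ≤ M) (hK : ∀ x ∈ Icc a b, ‖∫ t in a..x, f t‖ ≤ K) :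
    ‖∫ t in a..b, η t * f t‖ ≤ K * (2 + M * (b - a)) := by
  set η' := derivWithin η (Icc a b)
  have hη' : ContinuousOn η' (Icc a b) := hη.continuousOn_derivWithin (uniqueDiffOn_Icc hab) le_rfl
  have hη'M : ∫ t in a..b, ‖η' t‖ ≤ M * (b - a) := calc
    ∫ t in a..b, ‖η' t‖ ≤ ∫ _ in a..b, M :=
      integral_mono_on_of_le_Ioo hab.le (hη'.norm.intervalIntegrable_of_Icc hab.le)
        intervalIntegrable_const fun t ht => by
          rw [show η' t = deriv η t from derivWithin_of_mem_nhds (Icc_mem_nhds ht.1 ht.2)]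
          exact hηM t ht
    _ = M * (b - a) := by rw [intervalIntegral.integral_const, smul_eq_mul, mul_comm]
  have hF : ContinuousOn (fun x => ∫ t in a..x, f t) (Icc a b) := by
    simpa only [uIcc_of_le hab.le] using
      continuousOn_primitive_interval (hf.integrableOn_Icc.mono_set (uIcc_of_le hab.le).subset)
  have hK0 : 0 ≤ K := (norm_nonneg _).trans (hK a (left_mem_Icc.2 hab.le))
  calc ‖∫ t in a..b, η t * f t‖ ≤ K * (‖η a‖ + ‖η b‖ + ∫ t in a..b, ‖η' t‖) :=
        norm_integral_mul_deriv_le hab.le hη.continuousOn hF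
          (fun t ht => hη.hasDerivAt_derivWithin_Icc one_ne_zero ht)
          (fun t ht => hf.hasDerivAt_integral_of_mem_Ioo ht)
          (hη'.intervalIntegrable_of_Icc hab.le) (hf.intervalIntegrable_of_Icc hab.le) hK
    _ ≤ K * (1 + 1 + M * (b - a)) := by
      gcongr
      exacts [hη1 a (left_mem_Icc.2 hab.le), hη1 b (right_mem_Icc.2 hab.le)]
    _ = K * (2 + M * (b - a)) := by norm_num

end

/-- (First-derivative van der Corput lemma with amplitude.)
If `φ : [a,b] → ℝ` is `C²` with `|φ′| ≥ λ > 0` and `φ′` monotone on `[a,b]`, and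
`η : [a,b] → ℂ` satisfies `|η| ≤ 1`, `|η′| ≤ M`, then
`|∫ₐᵇ η(t) e^{iμφ(t)} dt| ≤ C (1 + M(b−a)) / (μλ)` for all `μ > 0`,
with `C` an absolute constant. -/
theorem vanDerCorput_first_order :
    ∃ C : ℝ, 0 < C ∧
      ∀ (a b lam M : ℝ) (φ : ℝ → ℝ) (η : ℝ → ℂ),
        a < b → 0 < lam → 0 ≤ M →
        ContDiffOn ℝ 2 φ (Set.Icc a b) →
        (∀ t ∈ Set.Icc a b, lam ≤ |deriv φ t|) →
        (MonotoneOn (deriv φ) (Set.Icc a b) ∨ AntitoneOn (deriv φ) (Set.Icc a b)) →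
        ContDiffOn ℝ 1 η (Set.Icc a b) →
        (∀ t ∈ Set.Icc a b, ‖η t‖ ≤ 1) →
        (∀ t ∈ Set.Icc a b, ‖deriv η t‖ ≤ M) →
        ∀ μ : ℝ, 0 < μ →
          ‖∫ t in a..b, η t * Complex.exp (Complex.I * (μ * φ t))‖
            ≤ C * (1 + M * (b - a)) / (μ * lam) := by
  refine ⟨8, by norm_num, fun a b lam M φ η hab hlam hM hφ hφ' hmono hη hη1 hηM μ hμ => ?_⟩
  have hprimitive := fun x (hx : x ∈ Icc a b) =>
    norm_integral_cexp_le_of_contDiffOn hab hlam hμ hφ (fun t ht => hφ' t (Ioo_subset_Icc_self ht))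
      (hmono.imp (·.mono Ioo_subset_Icc_self) (·.mono Ioo_subset_Icc_self)) hx
  have hcont : ContinuousOn (fun t => Complex.exp (Complex.I * (μ * φ t))) (Icc a b) := by
    have hφc := hφ.continuousOn
    fun_prop
  calc ‖∫ t in a..b, η t * Complex.exp (Complex.I * (μ * φ t))‖
      ≤ 4 / (μ * lam) * (2 + M * (b - a)) :=
        norm_integral_mul_le_of_norm_primitive_le hab hη hcont hη1
          (fun t ht => hηM t (Ioo_subset_Icc_self ht)) hprimitive
    _ ≤ 8 * (1 + M * (b - a)) / (μ * lam) := by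
      rw [div_mul_eq_mul_div]
      exact div_le_div_of_nonneg_right (by nlinarith [mul_nonneg hM (sub_nonneg.2 hab.le)])
        (by positivity)
end

section
/- Let d ≥ 1, j ≥ 1 an integer, μ > 1, and z, z′ ∈ ℂᵈ with |z − z′| ≥ 2. Let η be a C¹ function supported in [−1,−1/4] ∪ [1/4,1] with |η| ≤ 1 and |η′| ≤ 1, and let φ(t) = t + (|z−z′|²/4)·cot t + (1/2)Im(z·z̄′). Then |∫ η(2ʲt) e^{iμφ(t)} dt| ≤ C·min{(μ·2^{2j})^{−1}, 2^{−j}} with C independent of z, z′, j, μ. -/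
/-!
On each half of the support of `η (2ʲ ·)`, where `2⁻ʲ⁻² ≤ |t| ≤ 2⁻ʲ`, the phase
`φ t = t + a cot t + b` with `a = ‖z - z'‖² / 4 ≥ 1` has `φ' t = 1 - a / sin² t`, so
`|φ'| ≳ sin⁻² t ≳ 4ʲ` and `|φ''| / φ'² ≲ |sin t| ≲ 2⁻ʲ`. One integration by parts,
`∫ g e^{iμφ} = -(iμ)⁻¹ ∫ (g / φ')' e^{iμφ}`, then bounds the integral by `μ⁻¹` times the length
`≲ 2⁻ʲ` of the interval times `|(g / φ')'| ≲ 2ʲ · 4⁻ʲ + 2⁻ʲ`, i.e. by `≲ (μ 4ʲ)⁻¹ ≤ 2⁻ʲ`.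
-/

open Real Complex Set MeasureTheory

theorem norm_integral_mul_exp_le_of_deriv_ne_zero {g g' : ℝ → ℂ} {φ φ' φ'' : ℝ → ℝ}
    {p q μ M : ℝ} (hpq : p ≤ q) (hμ : 0 < μ)
    (hg : ∀ t ∈ Icc p q, HasDerivAt g (g' t) t) (hg' : ContinuousOn g' (Icc p q))
    (hφ : ∀ t ∈ Icc p q, HasDerivAt φ (φ' t) t) (hφ' : ∀ t ∈ Icc p q, HasDerivAt φ' (φ'' t) t)
    (hφ'' : ContinuousOn φ'' (Icc p q)) (hφ'0 : ∀ t ∈ Icc p q, φ' t ≠ 0)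
    (hgp : g p = 0) (hgq : g q = 0)
    (hM : ∀ t ∈ Icc p q, ‖g' t‖ / |φ' t| + ‖g t‖ * |φ'' t| / φ' t ^ 2 ≤ M) :
    ‖∫ t in p..q, g t * exp (I * (μ * φ t))‖ ≤ M * (q - p) / μ := by
  have hIμ : (I * μ : ℂ) ≠ 0 := mul_ne_zero I_ne_zero (ofReal_ne_zero.2 hμ.ne')
  set e : ℝ → ℂ := fun t => exp (I * (μ * φ t))
  set u' : ℝ → ℂ := fun t => (g' t * φ' t - g t * φ'' t) / (φ' t : ℂ) ^ 2
  have he : ∀ t ∈ Icc p q, HasDerivAt e (I * (μ * φ' t) * e t) t := fun t ht => by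
    simpa [mul_comm] using (((hφ t ht).ofReal_comp.const_mul (μ : ℂ)).const_mul I).cexp
  have hu : ∀ t ∈ Icc p q, HasDerivAt (fun t => g t / φ' t) (u' t) t := fun t ht =>
    (hg t ht).fun_div (hφ' t ht).ofReal_comp (ofReal_ne_zero.2 (hφ'0 t ht))
  have hv : ∀ t ∈ Icc p q, HasDerivAt (fun t => e t / (I * μ)) (φ' t * e t) t := fun t ht =>
    ((he t ht).div_const (I * μ)).congr_deriv (by rw [div_eq_iff hIμ]; ring)
  have hφ'c : ContinuousOn φ' (Icc p q) :=
    continuousOn_of_forall_continuousAt fun t ht => (hφ' t ht).continuousAt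
  have hgc : ContinuousOn g (Icc p q) :=
    continuousOn_of_forall_continuousAt fun t ht => (hg t ht).continuousAt
  have hec : ContinuousOn e (Icc p q) :=
    continuousOn_of_forall_continuousAt fun t ht => (he t ht).continuousAt
  have hu'c : ContinuousOn u' (Icc p q) :=
    ((hg'.mul (continuous_ofReal.comp_continuousOn hφ'c)).sub
      (hgc.mul (continuous_ofReal.comp_continuousOn hφ''))).div
      ((continuous_ofReal.comp_continuousOn hφ'c).pow 2)
      fun t ht => pow_ne_zero 2 (ofReal_ne_zero.2 (hφ'0 t ht))
  -- integrate by parts, writing `g e` as `(g / φ') * (e / (I μ))'`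
  have hibp : ∫ t in p..q, g t * e t = -∫ t in p..q, u' t * (e t / (I * μ)) := by
    have hgu : ∀ t ∈ uIcc p q, g t * e t = g t / φ' t * (φ' t * e t) := fun t ht => by
      rw [uIcc_of_le hpq] at ht
      field_simp [ofReal_ne_zero.2 (hφ'0 t ht)]
    rw [intervalIntegral.integral_congr hgu, intervalIntegral.integral_mul_deriv_eq_deriv_mul
      (fun t ht => hu t (by rwa [uIcc_of_le hpq] at ht))
      (fun t ht => hv t (by rwa [uIcc_of_le hpq] at ht))
      (hu'c.intervalIntegrable_of_Icc hpq)
      (((continuous_ofReal.comp_continuousOn hφ'c).mul hec).intervalIntegrable_of_Icc hpq)]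
    simp [hgp, hgq]
  have hu'M : ∀ t ∈ Icc p q, ‖u' t‖ ≤ M := fun t ht => by
    have hφ't : 0 < |φ' t| := abs_pos.2 (hφ'0 t ht)
    calc ‖u' t‖ ≤ (‖g' t‖ * |φ' t| + ‖g t‖ * |φ'' t|) / φ' t ^ 2 := by
          simp only [u', norm_div, norm_pow, norm_real, Real.norm_eq_abs, sq_abs]
          gcongr
          refine (norm_sub_le _ _).trans_eq ?_
          simp only [norm_mul, norm_real, Real.norm_eq_abs]
      _ = ‖g' t‖ / |φ' t| + ‖g t‖ * |φ'' t| / φ' t ^ 2 := by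
          rw [← sq_abs (φ' t)]
          field_simp
      _ ≤ M := hM t ht
  have hbound : ∀ t ∈ uIoc p q, ‖u' t * (e t / (I * μ))‖ ≤ M / μ := fun t ht => by
    rw [uIoc_of_le hpq] at ht
    simpa [e, norm_exp, abs_of_pos hμ, div_eq_mul_inv] using
      div_le_div_of_nonneg_right (hu'M t (Ioc_subset_Icc_self ht)) hμ.le
  calc ‖∫ t in p..q, g t * e t‖ ≤ M / μ * |q - p| := by
        rw [hibp, norm_neg]
        exact intervalIntegral.norm_integral_le_of_norm_le_const hbound
    _ = M * (q - p) / μ := by rw [abs_of_nonneg (sub_nonneg.2 hpq)]; ring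

theorem integral_eq_intervalIntegral_add_intervalIntegral {E : Type*} [NormedAddCommGroup E]
    [NormedSpace ℝ E] {f : ℝ → E} {p₁ q₁ p₂ q₂ : ℝ} (h₁ : p₁ ≤ q₁) (h₁₂ : q₁ < p₂) (h₂ : p₂ ≤ q₂)
    (hf : ∀ t ∉ Icc p₁ q₁ ∪ Icc p₂ q₂, f t = 0) (hf₁ : IntegrableOn f (Icc p₁ q₁))
    (hf₂ : IntegrableOn f (Icc p₂ q₂)) :
    ∫ t, f t = (∫ t in p₁..q₁, f t) + ∫ t in p₂..q₂, f t := by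
  have hdisj : Disjoint (Icc p₁ q₁) (Icc p₂ q₂) :=
    disjoint_left.2 fun t ht₁ ht₂ => by linarith [ht₁.2, ht₂.1]
  rw [← setIntegral_eq_integral_of_forall_compl_eq_zero hf,
    setIntegral_union hdisj measurableSet_Icc hf₁ hf₂, integral_Icc_eq_integral_Ioc,
    integral_Icc_eq_integral_Ioc, intervalIntegral.integral_of_le h₁,
    intervalIntegral.integral_of_le h₂]

theorem sin_ne_zero_of_abs_lt_pi {t : ℝ} (h0 : t ≠ 0) (ht : |t| < π) : Real.sin t ≠ 0 := by
  rwa [Ne, sin_eq_zero_iff_of_lt_of_lt (by linarith [neg_abs_le t])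
    (by linarith [le_abs_self t])]

theorem div_two_mul_sq_le_abs_one_sub_div_sq {a s : ℝ} (hs : s ≠ 0) (h : 2 * s ^ 2 ≤ a) :
    a / (2 * s ^ 2) ≤ |1 - a / s ^ 2| := by
  have hs2 : 0 < s ^ 2 := by positivity
  rw [abs_of_nonpos (by rw [sub_nonpos, le_div_iff₀ hs2]; linarith)]
  rw [div_le_iff₀ (by positivity)]
  field_simp
  linarith

noncomputable def cotPhase (a b t : ℝ) : ℝ := t + a * (Real.cos t / Real.sin t) + b

theorem hasDerivAt_cotPhase (a b : ℝ) {t : ℝ} (hs : Real.sin t ≠ 0) :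
    HasDerivAt (cotPhase a b) (1 - a / Real.sin t ^ 2) t := by
  have hcot := ((Real.hasDerivAt_cos t).fun_div (Real.hasDerivAt_sin t) hs).const_mul a
  refine (((hasDerivAt_id' t).add hcot).add_const b).congr_deriv ?_
  field_simp
  linear_combination (-a) * Real.sin_sq_add_cos_sq t

theorem hasDerivAt_one_sub_div_sin_sq (a : ℝ) {t : ℝ} (hs : Real.sin t ≠ 0) :
    HasDerivAt (fun t => 1 - a / Real.sin t ^ 2) (2 * a * Real.cos t / Real.sin t ^ 3) t := by
  refine (((hasDerivAt_const t a).fun_div ((Real.hasDerivAt_sin t).pow 2)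
    (pow_ne_zero 2 hs)).const_sub 1).congr_deriv ?_
  simp only [Pi.pow_apply]
  field_simp
  ring

theorem cotPhase_deriv_ratio_le {a t x y : ℝ} (ha : 1 ≤ a) (hs : Real.sin t ≠ 0)
    (hs2 : Real.sin t ^ 2 ≤ 1 / 2) (hx : 0 ≤ x) (hy : 0 ≤ y) :
    x / |1 - a / Real.sin t ^ 2|
        + y * |2 * a * Real.cos t / Real.sin t ^ 3| / (1 - a / Real.sin t ^ 2) ^ 2
      ≤ 2 * x * Real.sin t ^ 2 + 8 * y * |Real.sin t| := by
  set s := Real.sin t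
  set D := |1 - a / s ^ 2|
  have hsa : 0 < |s| := abs_pos.2 hs
  have hss : s ^ 2 = |s| ^ 2 := (sq_abs s).symm
  have hD : a / (2 * |s| ^ 2) ≤ D := hss ▸ div_two_mul_sq_le_abs_one_sub_div_sq hs (by linarith)
  have hDpos : 0 < D := lt_of_lt_of_le (by positivity) hD
  have hnum : |2 * a * Real.cos t / s ^ 3| ≤ 2 * a / |s| ^ 3 := by
    rw [abs_div, abs_pow, abs_mul, abs_of_pos (by positivity : (0 : ℝ) < 2 * a)]
    refine div_le_div_of_nonneg_right ?_ (by positivity)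
    exact mul_le_of_le_one_right (by positivity) (Real.abs_cos_le_one t)
  have h1 : x / D ≤ 2 * x * s ^ 2 := by
    rw [div_le_iff₀ hDpos, hss]
    have : 1 ≤ 2 * |s| ^ 2 * D := by
      rw [div_le_iff₀ (by positivity)] at hD
      linarith
    nlinarith
  have h2 : y * |2 * a * Real.cos t / s ^ 3| / (1 - a / s ^ 2) ^ 2 ≤ 8 * y * |s| := by
    have hD2 : 2 * a / |s| ^ 3 ≤ 8 * |s| * D ^ 2 :=
      calc 2 * a / |s| ^ 3 ≤ 2 * a ^ 2 / |s| ^ 3 := by gcongr; nlinarith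
        _ = 8 * |s| * (a / (2 * |s| ^ 2)) ^ 2 := by field_simp; ring
        _ ≤ 8 * |s| * D ^ 2 := by gcongr
    rw [← sq_abs (1 - _), div_le_iff₀ (by positivity)]
    calc y * |2 * a * Real.cos t / s ^ 3| ≤ y * (8 * |s| * D ^ 2) :=
          mul_le_mul_of_nonneg_left (hnum.trans hD2) hy
      _ = 8 * y * |s| * D ^ 2 := by ring
  linarith

theorem norm_integral_mul_exp_cotPhase_le {a b μ K σ p q : ℝ} {g g' : ℝ → ℂ} (hpq : p ≤ q)
    (hμ : 0 < μ) (ha : 1 ≤ a) (hg : ∀ t ∈ Icc p q, HasDerivAt g (g' t) t)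
    (hg' : ContinuousOn g' (Icc p q)) (hg1 : ∀ t ∈ Icc p q, ‖g t‖ ≤ 1)
    (hgK : ∀ t ∈ Icc p q, ‖g' t‖ ≤ K) (hgp : g p = 0) (hgq : g q = 0)
    (h0 : (0 : ℝ) ∉ Icc p q) (hσ : Icc p q ⊆ Icc (-σ) σ) (hσ2 : σ ^ 2 ≤ 1 / 2) :
    ‖∫ t in p..q, g t * exp (I * (μ * cotPhase a b t))‖
      ≤ (2 * K * σ ^ 2 + 8 * σ) * (q - p) / μ := by
  have hsin : ∀ t ∈ Icc p q, Real.sin t ≠ 0 ∧ |Real.sin t| ≤ σ := fun t ht => by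
    have htσ : |t| ≤ σ := abs_le.2 (hσ ht)
    have hσπ : σ < π := by nlinarith [pi_gt_three]
    exact ⟨sin_ne_zero_of_abs_lt_pi (fun h => h0 (h ▸ ht)) (htσ.trans_lt hσπ),
      abs_sin_le_abs.trans htσ⟩
  have hsq : ∀ t ∈ Icc p q, Real.sin t ^ 2 ≤ σ ^ 2 := fun t ht => by
    rw [← sq_abs]; exact pow_le_pow_left₀ (abs_nonneg _) (hsin t ht).2 2
  refine norm_integral_mul_exp_le_of_deriv_ne_zero hpq hμ hg hg'
    (fun t ht => hasDerivAt_cotPhase a b (hsin t ht).1)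
    (fun t ht => hasDerivAt_one_sub_div_sin_sq a (hsin t ht).1) ?_ ?_ hgp hgq fun t ht => ?_
  · exact ContinuousOn.div (by fun_prop) (by fun_prop) fun t ht => pow_ne_zero 3 (hsin t ht).1
  · intro t ht
    have hs := (hsin t ht).1
    have hs2 : 2 * Real.sin t ^ 2 ≤ a := by linarith [hsq t ht]
    refine abs_pos.1 (lt_of_lt_of_le ?_ (div_two_mul_sq_le_abs_one_sub_div_sq hs hs2))
    positivity
  · obtain ⟨hs, hsσ⟩ := hsin t ht
    refine (cotPhase_deriv_ratio_le ha hs ((hsq t ht).trans hσ2) (norm_nonneg _)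
      (norm_nonneg _)).trans ?_
    have hK : 0 ≤ K := (norm_nonneg _).trans (hgK t ht)
    have h1 := mul_le_mul (hgK t ht) (hsq t ht) (sq_nonneg _) hK
    have h2 := mul_le_mul (hg1 t ht) hsσ (abs_nonneg _) zero_le_one
    linarith

theorem norm_integral_mul_exp_cotPhase_le_of_support {a b μ K p q : ℝ} {g g' : ℝ → ℂ}
    (hμ : 0 < μ) (ha : 1 ≤ a) (hp : 0 < p) (hpq : p ≤ q) (hq : q ^ 2 ≤ 1 / 2)
    (hg : ∀ t, HasDerivAt g (g' t) t) (hg' : Continuous g') (hg1 : ∀ t, ‖g t‖ ≤ 1)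
    (hgK : ∀ t, ‖g' t‖ ≤ K) (hsupp : ∀ t, g t ≠ 0 → p < |t| ∧ |t| < q) :
    ‖∫ t, g t * exp (I * (μ * cotPhase a b t))‖
      ≤ 2 * ((2 * K * q ^ 2 + 8 * q) * (q - p) / μ) := by
  set F : ℝ → ℂ := fun t => g t * exp (I * (μ * cotPhase a b t))
  have hg0 : ∀ t, (|t| ≤ p ∨ q ≤ |t|) → g t = 0 := fun t ht => by
    by_contra h
    have := hsupp t h
    rcases ht with ht | ht <;> linarith
  have hFc : ∀ t, t ≠ 0 → |t| ≤ q → ContinuousAt F t := fun t h0 htq => by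
    have hs := sin_ne_zero_of_abs_lt_pi h0 (by nlinarith [pi_gt_three, abs_nonneg t])
    have := (hasDerivAt_cotPhase a b hs).continuousAt
    exact (hg t).continuousAt.mul (by fun_prop)
  have hpiece : ∀ {p' q' : ℝ}, p' ≤ q' → (0 : ℝ) ∉ Icc p' q' → Icc p' q' ⊆ Icc (-q) q →
      g p' = 0 → g q' = 0 → IntegrableOn F (Icc p' q') ∧
        ‖∫ t in p'..q', F t‖ ≤ (2 * K * q ^ 2 + 8 * q) * (q' - p') / μ :=
    fun hpq' h0 hsub hp' hq' => by
      refine ⟨ContinuousOn.integrableOn_Icc (continuousOn_of_forall_continuousAt fun t ht =>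
        hFc t (fun h => h0 (h ▸ ht)) (abs_le.2 (hsub ht))), ?_⟩
      exact norm_integral_mul_exp_cotPhase_le hpq' hμ ha (fun t _ => hg t) hg'.continuousOn
        (fun t _ => hg1 _) (fun t _ => hgK t) hp' hq' h0 hsub hq
  have hzero : ∀ t ∉ Icc (-q) (-p) ∪ Icc p q, F t = 0 := fun t ht => by
    simp only [F]
    rw [hg0 t ?_, zero_mul]
    by_contra! h
    rcases abs_cases t with ⟨h', -⟩ | ⟨h', -⟩ <;> rw [h'] at h
    · exact ht (.inr ⟨h.1.le, h.2.le⟩)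
    · exact ht (.inl ⟨by linarith, by linarith⟩)
  obtain ⟨hi₁, hb₁⟩ := hpiece (neg_le_neg hpq) (fun h => by linarith [h.2])
    (Icc_subset_Icc le_rfl (by linarith)) (hg0 _ (.inr (abs_neg q ▸ le_abs_self q)))
    (hg0 _ (.inl (by rw [abs_neg, abs_of_pos hp])))
  obtain ⟨hi₂, hb₂⟩ := hpiece hpq (fun h => by linarith [h.1])
    (Icc_subset_Icc (by linarith) le_rfl) (hg0 _ (.inl (abs_of_pos hp).le))
    (hg0 _ (.inr (le_abs_self q)))
  rw [neg_sub_neg] at hb₁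
  rw [integral_eq_intervalIntegral_add_intervalIntegral (neg_le_neg hpq) (by linarith) hpq hzero
    hi₁ hi₂]
  calc _ ≤ ‖∫ t in -q..-p, F t‖ + ‖∫ t in p..q, F t‖ := norm_add_le _ _
    _ ≤ _ := by linarith

theorem abs_mem_Icc_of_ne_zero {η : ℝ → ℂ}
    (hsupp : Function.support η ⊆ Icc (-1) (-1 / 4) ∪ Icc (1 / 4) 1) {x : ℝ} (hx : η x ≠ 0) :
    |x| ∈ Icc (1 / 4) 1 := by
  rcases hsupp hx with ⟨h₁, h₂⟩ | ⟨h₁, h₂⟩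
  · rw [abs_of_neg (by linarith)]; constructor <;> linarith
  · rw [abs_of_pos (by linarith)]; exact ⟨h₁, h₂⟩

theorem norm_integral_dilate_mul_exp_cotPhase_le {η : ℝ → ℂ} (hη : ContDiff ℝ 1 η)
    (hsupp : Function.support η ⊆ Icc (-1) (-1 / 4) ∪ Icc (1 / 4) 1) (hη1 : ∀ t, ‖η t‖ ≤ 1)
    (hη'1 : ∀ t, ‖deriv η t‖ ≤ 1) {a b μ k : ℝ} (ha : 1 ≤ a) (hμ : 0 < μ) (hk : 2 ≤ k) :
    ‖∫ t, η (k * t) * exp (I * (μ * cotPhase a b t))‖ ≤ 24 / (μ * k ^ 2) := by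
  have hk0 : 0 < k := by linarith
  have hg : ∀ t, HasDerivAt (fun t => η (k * t)) (k * deriv η (k * t)) t := fun t =>
    (((hη.differentiable one_ne_zero (k * t)).hasDerivAt).scomp t
      (hasDerivAt_const_mul k)).congr_deriv Complex.real_smul
  have hg' : Continuous fun t => (k : ℂ) * deriv η (k * t) := by
    have := hη.continuous_deriv le_rfl
    fun_prop
  have hgK : ∀ t, ‖(k : ℂ) * deriv η (k * t)‖ ≤ k := fun t => by
    rw [norm_mul, norm_real, Real.norm_of_nonneg hk0.le]
    exact mul_le_of_le_one_right hk0.le (hη'1 _)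
  -- `η (k ·)` lives on `1/(4k) ≤ |t| ≤ 1/k`; the wider bounds make it vanish at their endpoints
  have hsupp' : ∀ t, η (k * t) ≠ 0 → 1 / (8 * k) < |t| ∧ |t| < 9 / (8 * k) := fun t ht => by
    obtain ⟨h₁, h₂⟩ := abs_mem_Icc_of_ne_zero hsupp ht
    rw [abs_mul, abs_of_pos hk0] at h₁ h₂
    constructor <;> [rw [div_lt_iff₀ (by positivity)]; rw [lt_div_iff₀ (by positivity)]] <;>
      linarith
  have hq : 9 / (8 * k) ≤ 9 / 16 := by gcongr; linarith
  refine (norm_integral_mul_exp_cotPhase_le_of_support hμ ha (by positivity)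
    (by gcongr; norm_num) ((pow_le_pow_left₀ (by positivity) hq 2).trans (by norm_num)) hg hg'
    (fun t => hη1 _) hgK hsupp').trans ?_
  field_simp
  norm_num

theorem oscillatory_integral_Ij_far_general (d : ℕ) :
    ∃ C : ℝ, 0 < C ∧
      ∀ (j : ℕ), 1 ≤ j → ∀ (μ : ℝ), 1 < μ →
      ∀ (z z' : EuclideanSpace ℂ (Fin d)), 2 ≤ ‖z - z'‖ →
      ∀ (η : ℝ → ℂ), ContDiff ℝ 1 η →
        (Function.support η ⊆ Set.Icc (-1) (-1/4) ∪ Set.Icc (1/4) 1) →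
        (∀ t, ‖η t‖ ≤ 1) → (∀ t, ‖deriv η t‖ ≤ 1) →
        ‖∫ t : ℝ, η ((2:ℝ) ^ j * t) *
            Complex.exp (Complex.I * (μ * (t + (‖z - z'‖ ^ 2 / 4) * (Real.cos t / Real.sin t)
              + (1 / 2) * (∑ i : Fin d, z i * (starRingEnd ℂ) (z' i)).im)))‖
          ≤ C * min ((μ * (2:ℝ) ^ (2 * j))⁻¹) (((2:ℝ) ^ j)⁻¹) := by
  refine ⟨24, by norm_num, fun j hj μ hμ z z' hzz η hη hsupp hη1 hη'1 => ?_⟩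
  have hk : (2 : ℝ) ≤ 2 ^ j := by simpa using pow_le_pow_right₀ one_le_two hj
  have ha : 1 ≤ ‖z - z'‖ ^ 2 / 4 := by nlinarith
  have hmin : min ((μ * (2:ℝ) ^ (2 * j))⁻¹) ((2 ^ j)⁻¹) = (μ * (2 ^ j) ^ 2)⁻¹ := by
    rw [pow_mul', min_eq_left]
    gcongr
    nlinarith
  rw [hmin, ← div_eq_mul_inv]
  convert norm_integral_dilate_mul_exp_cotPhase_le hη hsupp hη1 hη'1
    (b := (1 / 2) * (∑ i : Fin d, z i * (starRingEnd ℂ) (z' i)).im) ha (zero_lt_one.trans hμ) hk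
    using 6
  simp only [cotPhase]
  push_cast
  ring

/-- For `d ≥ 1`, `j ≥ 1`, `μ > 1` and `z, z′ ∈ ℂᵈ` with
`‖z − z′‖ ≥ 2`, and `η` a `C¹` function supported in `[−1,−1/4] ∪ [1/4,1]`
with `|η| ≤ 1`, `|η′| ≤ 1`, the oscillatory integral with phase
`φ(t) = t + (‖z−z′‖²/4) cot t + (1/2) Im(z·z̄′)` satisfies
`|∫ η(2ʲ t) e^{iμφ(t)} dt| ≤ C min{(μ 2^{2j})⁻¹, 2⁻ʲ}`, with `C` independent
of `z, z′, j, μ`. -/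
theorem oscillatory_integral_Ij_far (d : ℕ) (hd : 1 ≤ d) :
    ∃ C : ℝ, 0 < C ∧
      ∀ (j : ℕ), 1 ≤ j → ∀ (μ : ℝ), 1 < μ →
      ∀ (z z' : EuclideanSpace ℂ (Fin d)), 2 ≤ ‖z - z'‖ →
      ∀ (η : ℝ → ℂ), ContDiff ℝ 1 η →
        (Function.support η ⊆ Set.Icc (-1) (-1/4) ∪ Set.Icc (1/4) 1) →
        (∀ t, ‖η t‖ ≤ 1) → (∀ t, ‖deriv η t‖ ≤ 1) →
        ‖∫ t : ℝ, η ((2:ℝ) ^ j * t) *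
            Complex.exp (Complex.I * (μ * (t + (‖z - z'‖ ^ 2 / 4) * (Real.cos t / Real.sin t)
              + (1 / 2) * (∑ i : Fin d, z i * (starRingEnd ℂ) (z' i)).im)))‖
          ≤ C * min ((μ * (2:ℝ) ^ (2 * j))⁻¹) (((2:ℝ) ^ j)⁻¹) :=
  oscillatory_integral_Ij_far_general d
end

section
/- Let 0 < a < 1/2, b ∈ ℝ with a² + b² ≥ c² > 0, and let ζ ∈ C^∞(ℝ) be supported in (−1,1) with |ζ| ≤ 1. Then there is a constant C = C(c) such that for every n ∈ ℕ and every t ∈ ℝ, |Σ_{k=1}^n ζ(k/n) sin(2kt)/(k + a + ib)| ≤ C, uniformly in n, t, a, b. -/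
open Real Complex

/-- `|sin (m t)| ≤ m |sin t|` for natural `m`. -/
lemma aux_sin_nat_mul_le (t : ℝ) : ∀ m : ℕ, |Real.sin (m * t)| ≤ m * |Real.sin t| := by
  intro m
  induction m with
  | zero => simp
  | succ m ih =>
    have h : ((m + 1 : ℕ) : ℝ) * t = m * t + t := by push_cast; ring
    rw [h, Real.sin_add]
    calc |Real.sin (m * t) * Real.cos t + Real.cos (m * t) * Real.sin t|
        ≤ |Real.sin (m * t) * Real.cos t| + |Real.cos (m * t) * Real.sin t| := abs_add_le _ _
      _ ≤ |Real.sin (m * t)| * 1 + 1 * |Real.sin t| := by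
          rw [abs_mul, abs_mul]
          gcongr
          · exact Real.abs_cos_le_one t
          · exact Real.abs_cos_le_one _
      _ ≤ m * |Real.sin t| + 1 * |Real.sin t| := by
          simp only [mul_one, one_mul]
          linarith [ih]
      _ = ((m + 1 : ℕ) : ℝ) * |Real.sin t| := by push_cast; ring

/-- Abel summation identity over `Ioc 0 n`. -/
lemma aux_abel (c g : ℕ → ℂ) (n : ℕ) :
    ∑ k ∈ Finset.Ioc 0 n, c k * g k
      = ∑ k ∈ Finset.Ioc 0 n, (c k - c (k + 1)) * (∑ j ∈ Finset.Ioc 0 k, g j)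
        + c (n + 1) * ∑ j ∈ Finset.Ioc 0 n, g j := by
  induction n with
  | zero => simp
  | succ n ih =>
    simp only [Finset.sum_Ioc_succ_top (Nat.zero_le n)]
    rw [ih]
    ring

/-- Telescoping bound for the sum of inverse squares. -/
lemma aux_sum_inv_sq {m : ℕ} (hm : 1 ≤ m) :
    ∀ n, m ≤ n → ∑ k ∈ Finset.Ioc m n, (1 : ℝ) / (k : ℝ) ^ 2 ≤ 1 / m - 1 / n := by
  intro n h
  induction n, h using Nat.le_induction with
  | base => simp
  | succ n hn ih =>
    rw [Finset.sum_Ioc_succ_top hn]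
    have hn' : (0 : ℝ) < n := by exact_mod_cast Nat.lt_of_lt_of_le Nat.zero_lt_one (le_trans hm hn)
    have hn1 : (0 : ℝ) < (n : ℝ) + 1 := by positivity
    have key : (1 : ℝ) / ((n : ℕ) + 1 : ℝ) ^ 2 ≤ 1 / n - 1 / ((n : ℝ) + 1) := by
      rw [div_sub_div _ _ (ne_of_gt hn') (ne_of_gt hn1)]
      rw [div_le_div_iff₀ (by positivity) (by positivity)]
      ring_nf
      nlinarith [hn']
    push_cast
    push_cast at ih key
    linarith



lemma aux_abs_exp_sub_one (t : ℝ) :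
    ‖Complex.exp ((2 * t : ℝ) * Complex.I) - 1‖ = 2 * |Real.sin t| := by
  have h1 : ‖Complex.exp ((2 * t : ℝ) * Complex.I) - 1‖ ^ 2
      = (2 * |Real.sin t|) ^ 2 := by
    rw [Complex.sq_norm, Complex.normSq_apply]
    simp only [Complex.sub_re, Complex.sub_im, Complex.one_re, Complex.one_im,
      Complex.exp_ofReal_mul_I_re, Complex.exp_ofReal_mul_I_im]
    rw [Real.sin_two_mul, Real.cos_two_mul]
    have h := Real.sin_sq_add_cos_sq t
    have h2 : |Real.sin t| ^ 2 = Real.sin t ^ 2 := _root_.sq_abs (Real.sin t)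
    nlinarith [h, h2]
  have h0 := norm_nonneg (Complex.exp ((2 * t : ℝ) * Complex.I) - 1)
  have h0' : (0 : ℝ) ≤ 2 * |Real.sin t| := by positivity
  nlinarith [h1, h0, h0']

lemma aux_partial_sin_bound (t : ℝ) (hs : Real.sin t ≠ 0) (k : ℕ) :
    |∑ j ∈ Finset.Ioc 0 k, Real.sin (2 * j * t)| ≤ 1 / |Real.sin t| := by
  set x := Complex.exp ((2 * t : ℝ) * Complex.I) with hxdef
  have hxj : ∀ j : ℕ, x ^ j = Complex.exp (((2 * j * t : ℝ)) * Complex.I) := by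
    intro j
    rw [hxdef, ← Complex.exp_nat_mul]
    congr 1
    push_cast
    ring
  have him : ∀ j : ℕ, Real.sin (2 * j * t) = (x ^ j).im := by
    intro j
    rw [hxj j, Complex.exp_ofReal_mul_I_im]
  have habs : ‖x - 1‖ = 2 * |Real.sin t| := aux_abs_exp_sub_one t
  have hs0 : 0 < |Real.sin t| := abs_pos.2 hs
  have hx1 : x ≠ 1 := by
    intro h
    rw [h, sub_self] at habs
    simp at habs
    exact hs habs
  have hgeom : ∑ j ∈ Finset.Ioc 0 k, x ^ j = (x ^ (k + 1) - x ^ 1) / (x - 1) := by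
    rw [← Finset.Icc_add_one_left_eq_Ioc, ← Finset.Ico_add_one_right_eq_Icc]
    exact geom_sum_Ico hx1 (Nat.succ_le_succ (Nat.zero_le k))
  have hxabs : ‖x‖ = 1 := Complex.norm_exp_ofReal_mul_I (2 * t)
  have hbound : ‖∑ j ∈ Finset.Ioc 0 k, x ^ j‖ ≤ 1 / |Real.sin t| := by
    rw [hgeom, norm_div, habs]
    have : ‖x ^ (k + 1) - x ^ 1‖ ≤ 2 := by
      calc ‖x ^ (k + 1) - x ^ 1‖
          ≤ ‖x ^ (k + 1)‖ + ‖x ^ 1‖ := by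
            exact (norm_sub_le _ _)
        _ = 1 + 1 := by rw [norm_pow, norm_pow, hxabs, one_pow, one_pow]
        _ = 2 := by norm_num
    rw [div_le_div_iff₀ (by positivity) hs0]
    nlinarith [this]
  calc |∑ j ∈ Finset.Ioc 0 k, Real.sin (2 * j * t)|
      = |(∑ j ∈ Finset.Ioc 0 k, x ^ j).im| := by
        rw [Complex.im_sum]
        congr 1
        exact Finset.sum_congr rfl fun j _ => him j
    _ ≤ ‖∑ j ∈ Finset.Ioc 0 k, x ^ j‖ := Complex.abs_im_le_norm _
    _ ≤ 1 / |Real.sin t| := hbound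

/-- (Uniform bound on the conjugate-type Dirichlet sum.)
Let `ζ ∈ C^∞(ℝ)` be supported in `(−1,1)` with `|ζ| ≤ 1` and let `c > 0`.
Then there is `C = C(ζ, c)` such that for all `0 < a < 1/2`, `b ∈ ℝ` with
`a² + b² ≥ c²`, all `n ∈ ℕ` and all `t ∈ ℝ`,
`|Σ_{k=1}^n ζ(k/n) sin(2kt)/(k + a + ib)| ≤ C`. -/
theorem dirichlet_sum_uniform_bound
    (ζ : ℝ → ℝ) (hζ : ContDiff ℝ (⊤ : ℕ∞) ζ)
    (hsupp : Function.support ζ ⊆ Set.Ioo (-1) 1)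
    (hbdd : ∀ s, |ζ s| ≤ 1)
    (c : ℝ) (hc : 0 < c) :
    ∃ C : ℝ, 0 < C ∧
      ∀ (a b : ℝ), 0 < a → a < 1/2 → c ^ 2 ≤ a ^ 2 + b ^ 2 →
      ∀ (n : ℕ) (t : ℝ),
        ‖∑ k ∈ Finset.Icc 1 n,
            ((ζ ((k : ℝ) / n) * Real.sin (2 * k * t) : ℝ) : ℂ)
              / ((k : ℂ) + a + b * Complex.I)‖ ≤ C := by
  -- ζ vanishes on `[1, ∞)`
  have hζ0 : ∀ x : ℝ, (1 : ℝ) ≤ x → ζ x = 0 := by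
    intro x hx
    by_contra h
    have hmem := hsupp (Function.mem_support.2 h)
    exact absurd hmem.2 (by linarith)
  -- Lipschitz constant for ζ
  have hcs : HasCompactSupport ζ := by
    apply HasCompactSupport.intro (isCompact_Icc (a := (-1 : ℝ)) (b := 1))
    intro x hx
    by_contra h
    exact hx (Set.Ioo_subset_Icc_self (hsupp (Function.mem_support.2 h)))
  have hdc : Continuous (deriv ζ) := hζ.continuous_deriv (by simp)
  obtain ⟨L0, hL0⟩ := (hcs.deriv).exists_bound_of_continuous hdc
  set L : ℝ := max L0 0 with hLdef
  have hLnn : 0 ≤ L := le_max_right _ _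
  have hL : ∀ x y : ℝ, |ζ x - ζ y| ≤ L * |x - y| := by
    intro x y
    have h := Convex.norm_image_sub_le_of_norm_deriv_le (f := ζ) (s := Set.univ) (C := L)
      (fun z _ => (hζ.differentiable (by simp)).differentiableAt)
      (fun z _ => le_trans (hL0 z) (le_max_left _ _)) convex_univ
      (Set.mem_univ y) (Set.mem_univ x)
    simpa [Real.norm_eq_abs] using h
  refine ⟨2 * L + 12, by positivity, ?_⟩
  intro a b ha ha2 _ n t
  rcases Nat.eq_zero_or_pos n with hn0 | hn1
  · subst hn0
    simp
    positivity
  by_cases hsin : Real.sin t = 0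
  · -- trivial case : all sines vanish
    obtain ⟨j, hj⟩ := Real.sin_eq_zero_iff.1 hsin
    have hz : ∀ k ∈ Finset.Icc 1 n,
        ((ζ ((k : ℝ) / n) * Real.sin (2 * k * t) : ℝ) : ℂ)
          / ((k : ℂ) + a + b * Complex.I) = 0 := by
      intro k _
      have hzero : Real.sin (2 * k * t) = 0 := by
        rw [← hj]
        have h2 : 2 * (k : ℝ) * ((j : ℝ) * π) = ((2 * k * j : ℤ) : ℝ) * π := by
          push_cast; ring
        rw [h2]
        exact Real.sin_int_mul_pi _
      rw [hzero]
      simp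
    rw [Finset.sum_congr rfl hz]
    simp
    positivity
  -- main case
  have hs0 : 0 < |Real.sin t| := abs_pos.2 hsin
  set s := |Real.sin t| with hsdef
  have hsle1 : s ≤ 1 := abs_le.2 ⟨Real.neg_one_le_sin t, Real.sin_le_one t⟩
  set d : ℕ → ℂ := fun k => (k : ℂ) + a + b * Complex.I with hddef
  have hdre : ∀ k : ℕ, (d k).re = k + a := by
    intro k; simp [hddef]
  have hdabs : ∀ k : ℕ, (k : ℝ) ≤ ‖d k‖ := by
    intro k
    calc (k : ℝ) ≤ k + a := by linarith
      _ ≤ |(d k).re| := by rw [hdre k]; exact le_abs_self _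
      _ ≤ ‖d k‖ := Complex.abs_re_le_norm _
  have hdne : ∀ k : ℕ, d k ≠ 0 := by
    intro k h
    have h1 := hdre k
    rw [h] at h1
    simp at h1
    have hk : (0 : ℝ) ≤ (k : ℝ) := Nat.cast_nonneg k
    linarith
  set c' : ℕ → ℂ := fun k => ((ζ ((k : ℝ) / n) : ℝ) : ℂ) / d k with hcdef
  set g : ℕ → ℂ := fun k => ((Real.sin (2 * k * t) : ℝ) : ℂ) with hgdef
  have hcbd : ∀ k : ℕ, 1 ≤ k → ‖c' k‖ ≤ 1 / k := by
    intro k hk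
    have hk0 : (0 : ℝ) < k := by exact_mod_cast hk
    simp only [hcdef]
    rw [norm_div, Complex.norm_real, Real.norm_eq_abs]
    exact div_le_div₀ (by norm_num) (hbdd _) hk0 (hdabs k)
  have hSbd : ∀ k : ℕ, ‖∑ j ∈ Finset.Ioc 0 k, g j‖ ≤ 1 / s := by
    intro k
    have hsum : ∑ j ∈ Finset.Ioc 0 k, g j
        = ((∑ j ∈ Finset.Ioc 0 k, Real.sin (2 * j * t) : ℝ) : ℂ) := by
      simp only [hgdef]
      exact (Complex.ofReal_sum (Finset.Ioc 0 k) fun j => Real.sin (2 * j * t)).symm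
    rw [hsum, Complex.norm_real, Real.norm_eq_abs]
    exact aux_partial_sin_bound t hsin k
  -- rewrite the goal sum
  have hIcc : Finset.Icc 1 n = Finset.Ioc 0 n := Finset.Icc_add_one_left_eq_Ioc 0 n
  have hterm : ∀ k ∈ Finset.Ioc 0 n,
      ((ζ ((k : ℝ) / n) * Real.sin (2 * k * t) : ℝ) : ℂ)
        / ((k : ℂ) + a + b * Complex.I) = c' k * g k := by
    intro k _
    simp only [hcdef, hgdef, hddef]
    rw [Complex.ofReal_mul]
    ring
  rw [hIcc, Finset.sum_congr rfl hterm]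
  -- the cut point
  set N : ℕ := ⌈1 / (2 * s)⌉₊ with hNdef
  have hN1 : 1 ≤ N := Nat.ceil_pos.2 (by positivity)
  have hN0 : (0 : ℝ) < N := by exact_mod_cast hN1
  have hNle : (N : ℝ) ≤ 1 / (2 * s) + 1 := le_of_lt (Nat.ceil_lt_add_one (by positivity))
  have hNge : 1 / (2 * s) ≤ (N : ℝ) := Nat.le_ceil _
  -- head estimate
  have hhead : ∀ M : ℕ, M ≤ N →
      ‖∑ k ∈ Finset.Ioc 0 M, c' k * g k‖ ≤ 3 := by
    intro M hM
    have hper : ∀ k ∈ Finset.Ioc 0 M, ‖c' k * g k‖ ≤ 2 * s := by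
      intro k hk
      have hk1 : 1 ≤ k := (Finset.mem_Ioc.1 hk).1
      have hk0 : (0 : ℝ) < k := by exact_mod_cast hk1
      have h1 : ‖g k‖ ≤ 2 * k * s := by
        simp only [hgdef]
        rw [Complex.norm_real, Real.norm_eq_abs]
        have h2 : 2 * (k : ℝ) * t = ((2 * k : ℕ) : ℝ) * t := by push_cast; ring
        rw [h2]
        calc |Real.sin (((2 * k : ℕ) : ℝ) * t)| ≤ ((2 * k : ℕ) : ℝ) * s :=
              aux_sin_nat_mul_le t (2 * k)
          _ = 2 * k * s := by push_cast; ring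
      calc ‖c' k * g k‖ = ‖c' k‖ * ‖g k‖ := norm_mul _ _
        _ ≤ (1 / k) * (2 * k * s) := by
            apply mul_le_mul (hcbd k hk1) h1 (norm_nonneg _) (by positivity)
        _ = 2 * s := by field_simp
    calc ‖∑ k ∈ Finset.Ioc 0 M, c' k * g k‖
        ≤ ∑ k ∈ Finset.Ioc 0 M, ‖c' k * g k‖ := norm_sum_le _ _
      _ ≤ ∑ _k ∈ Finset.Ioc 0 M, 2 * s := Finset.sum_le_sum hper
      _ = M * (2 * s) := by
          rw [Finset.sum_const, Nat.card_Ioc, Nat.sub_zero, nsmul_eq_mul]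
      _ ≤ 3 := by
          have hMN : (M : ℝ) ≤ N := by exact_mod_cast hM
          have h1 : (M : ℝ) * (2 * s) ≤ (1 / (2 * s) + 1) * (2 * s) :=
            mul_le_mul_of_nonneg_right (le_trans hMN hNle) (by positivity)
          have h2 : (1 / (2 * s) + 1) * (2 * s) = 1 + 2 * s := by field_simp
          linarith
  by_cases hNn : N ≤ n
  · -- split head and tail at N
    have e1 : ∑ k ∈ Finset.Ioc 0 N, c' k * g k + ∑ k ∈ Finset.Ioc N n, c' k * g k
        = ∑ k ∈ Finset.Ioc 0 n, c' k * g k :=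
      Finset.sum_Ioc_consecutive _ (Nat.zero_le N) hNn
    have e2 : ∑ k ∈ Finset.Ioc 0 N, (c' k - c' (k + 1)) * (∑ j ∈ Finset.Ioc 0 k, g j)
          + ∑ k ∈ Finset.Ioc N n, (c' k - c' (k + 1)) * (∑ j ∈ Finset.Ioc 0 k, g j)
        = ∑ k ∈ Finset.Ioc 0 n, (c' k - c' (k + 1)) * (∑ j ∈ Finset.Ioc 0 k, g j) :=
      Finset.sum_Ioc_consecutive _ (Nat.zero_le N) hNn
    have habel_n := aux_abel c' g n
    have habel_N := aux_abel c' g N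
    have htail : ∑ k ∈ Finset.Ioc N n, c' k * g k
        = ∑ k ∈ Finset.Ioc N n, (c' k - c' (k + 1)) * (∑ j ∈ Finset.Ioc 0 k, g j)
          + c' (n + 1) * (∑ j ∈ Finset.Ioc 0 n, g j)
          - c' (N + 1) * (∑ j ∈ Finset.Ioc 0 N, g j) := by
      linear_combination habel_n - habel_N + e1 - e2
    have hc1 : c' (n + 1) = 0 := by
      have hzz : ζ (((n : ℝ) + 1) / n) = 0 := by
        apply hζ0
        rw [le_div_iff₀ (by exact_mod_cast hn1)]
        linarith [(by exact_mod_cast hn1 : (0:ℝ) < n)]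
      simp [hcdef]
      exact Or.inl hzz
    -- bound on the difference of coefficients
    have hΔ : ∀ k ∈ Finset.Ioc N n,
        ‖c' k - c' (k + 1)‖ ≤ L / (n * N) + 1 / (k : ℝ) ^ 2 := by
      intro k hk
      obtain ⟨hkN, hkn⟩ := Finset.mem_Ioc.1 hk
      have hk1 : 1 ≤ k := le_trans hN1 (le_of_lt hkN)
      have hk0 : (0 : ℝ) < k := by exact_mod_cast hk1
      have hkN' : (N : ℝ) ≤ k := by exact_mod_cast le_of_lt hkN
      have hn0 : (0 : ℝ) < n := by exact_mod_cast hn1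
      have hid : c' k - c' (k + 1)
          = ((ζ ((k : ℝ) / n) - ζ (((k + 1 : ℕ) : ℝ) / n) : ℝ) : ℂ) / d k
            + ((ζ (((k + 1 : ℕ) : ℝ) / n) : ℝ) : ℂ) / (d k * d (k + 1)) := by
        have h1 := hdne k
        have h2 := hdne (k + 1)
        have h3 : d (k + 1) = d k + 1 := by
          simp only [hddef]; push_cast; ring
        simp only [hcdef]
        push_cast
        rw [h3] at h2 ⊢
        field_simp
        ring
      rw [hid]
      have hb1 : ‖((ζ ((k : ℝ) / n) - ζ (((k + 1 : ℕ) : ℝ) / n) : ℝ) : ℂ) / d k‖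
          ≤ L / (n * N) := by
        rw [norm_div, Complex.norm_real, Real.norm_eq_abs]
        have hnum : |ζ ((k : ℝ) / n) - ζ (((k + 1 : ℕ) : ℝ) / n)| ≤ L * (1 / n) := by
          calc |ζ ((k : ℝ) / n) - ζ (((k + 1 : ℕ) : ℝ) / n)|
              ≤ L * |(k : ℝ) / n - ((k + 1 : ℕ) : ℝ) / n| := hL _ _
            _ = L * (1 / n) := by
                congr 1
                have : (k : ℝ) / n - ((k + 1 : ℕ) : ℝ) / n = -(1 / n) := by
                  push_cast; ring
                rw [this, abs_neg, abs_of_pos (by positivity)]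
        calc |ζ ((k : ℝ) / n) - ζ (((k + 1 : ℕ) : ℝ) / n)| / ‖d k‖
            ≤ (L * (1 / n)) / (k : ℝ) := div_le_div₀ (by positivity) hnum hk0 (hdabs k)
          _ ≤ (L * (1 / n)) / (N : ℝ) := by
              apply div_le_div_of_nonneg_left (by positivity) hN0 hkN'
          _ = L / (n * N) := by field_simp
      have hb2 : ‖((ζ (((k + 1 : ℕ) : ℝ) / n) : ℝ) : ℂ) / (d k * d (k + 1))‖
          ≤ 1 / (k : ℝ) ^ 2 := by
        rw [norm_div, Complex.norm_real, Real.norm_eq_abs, norm_mul]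
        have hk' : (k : ℝ) ≤ ‖d (k + 1)‖ := by
          calc (k : ℝ) ≤ ((k + 1 : ℕ) : ℝ) := by push_cast; linarith
            _ ≤ ‖d (k + 1)‖ := hdabs (k + 1)
        calc |ζ (((k + 1 : ℕ) : ℝ) / n)| / (‖d k‖ * ‖d (k + 1)‖)
            ≤ 1 / ((k : ℝ) * (k : ℝ)) := by
              apply div_le_div₀ (by norm_num) (hbdd _) (by positivity)
              exact mul_le_mul (hdabs k) hk' (le_of_lt hk0) (norm_nonneg _)
          _ = 1 / (k : ℝ) ^ 2 := by ring
      calc ‖_ + _‖ ≤ _ + _ := norm_add_le _ _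
        _ ≤ L / (n * N) + 1 / (k : ℝ) ^ 2 := add_le_add hb1 hb2
    have hsumΔ : ∑ k ∈ Finset.Ioc N n, ‖c' k - c' (k + 1)‖ ≤ (L + 1) / N := by
      have hn0 : (0 : ℝ) < n := by exact_mod_cast hn1
      calc ∑ k ∈ Finset.Ioc N n, ‖c' k - c' (k + 1)‖
          ≤ ∑ k ∈ Finset.Ioc N n, (L / (n * N) + 1 / (k : ℝ) ^ 2) := Finset.sum_le_sum hΔ
        _ = (n - N : ℕ) * (L / (n * N)) + ∑ k ∈ Finset.Ioc N n, 1 / (k : ℝ) ^ 2 := by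
            rw [Finset.sum_add_distrib, Finset.sum_const, Nat.card_Ioc, nsmul_eq_mul]
        _ ≤ n * (L / (n * N)) + (1 / N - 1 / n) := by
            apply add_le_add
            · apply mul_le_mul_of_nonneg_right _ (by positivity)
              exact_mod_cast Nat.sub_le n N
            · exact aux_sum_inv_sq hN1 n hNn
        _ ≤ L / N + 1 / N := by
            have : (n : ℝ) * (L / (n * N)) = L / N := by field_simp
            rw [this]
            have : (0:ℝ) < 1 / n := by positivity
            linarith
        _ = (L + 1) / N := by field_simp
    -- assemble the tail bound
    have hsinv : 1 / s ≤ 2 * N := by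
      rw [div_le_iff₀ hs0]
      calc (1 : ℝ) = (1 / (2 * s)) * (2 * s) := by field_simp
        _ ≤ (N : ℝ) * (2 * s) := by
            apply mul_le_mul_of_nonneg_right hNge (by positivity)
        _ = 2 * N * s := by ring
    have htailbd : ‖∑ k ∈ Finset.Ioc N n, c' k * g k‖ ≤ 2 * L + 4 := by
      rw [htail, hc1, zero_mul, add_zero]
      have hA : ‖∑ k ∈ Finset.Ioc N n,
          (c' k - c' (k + 1)) * (∑ j ∈ Finset.Ioc 0 k, g j)‖ ≤ 2 * (L + 1) := by
        calc ‖∑ k ∈ Finset.Ioc N n,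
              (c' k - c' (k + 1)) * (∑ j ∈ Finset.Ioc 0 k, g j)‖
            ≤ ∑ k ∈ Finset.Ioc N n,
              ‖(c' k - c' (k + 1)) * (∑ j ∈ Finset.Ioc 0 k, g j)‖ :=
              norm_sum_le _ _
          _ ≤ ∑ k ∈ Finset.Ioc N n, ‖c' k - c' (k + 1)‖ * (1 / s) := by
              apply Finset.sum_le_sum
              intro k _
              rw [norm_mul]
              exact mul_le_mul_of_nonneg_left (hSbd k) (norm_nonneg _)
          _ = (∑ k ∈ Finset.Ioc N n, ‖c' k - c' (k + 1)‖) * (1 / s) := by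
              rw [Finset.sum_mul]
          _ ≤ ((L + 1) / N) * (2 * N) := by
              apply mul_le_mul hsumΔ hsinv (by positivity) (by positivity)
          _ = 2 * (L + 1) := by field_simp
      have hB : ‖c' (N + 1) * (∑ j ∈ Finset.Ioc 0 N, g j)‖ ≤ 2 := by
        rw [norm_mul]
        have h1 : ‖c' (N + 1)‖ ≤ 1 / (N : ℝ) := by
          calc ‖c' (N + 1)‖ ≤ 1 / ((N + 1 : ℕ) : ℝ) :=
                hcbd (N + 1) (by omega)
            _ ≤ 1 / (N : ℝ) := by
                apply div_le_div_of_nonneg_left (by norm_num) hN0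
                push_cast; linarith
        calc ‖c' (N + 1)‖ * ‖∑ j ∈ Finset.Ioc 0 N, g j‖
            ≤ (1 / N) * (1 / s) := by
              apply mul_le_mul h1 (hSbd N) (norm_nonneg _) (by positivity)
          _ ≤ (1 / N) * (2 * N) := by
              apply mul_le_mul_of_nonneg_left hsinv (by positivity)
          _ = 2 := by field_simp
      calc ‖_ - _‖ ≤ _ + _ := norm_sub_le _ _
        _ ≤ 2 * (L + 1) + 2 := add_le_add hA hB
        _ = 2 * L + 4 := by ring
    calc ‖∑ k ∈ Finset.Ioc 0 n, c' k * g k‖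
        = ‖∑ k ∈ Finset.Ioc 0 N, c' k * g k
            + ∑ k ∈ Finset.Ioc N n, c' k * g k‖ := by rw [e1]
      _ ≤ ‖∑ k ∈ Finset.Ioc 0 N, c' k * g k‖
          + ‖∑ k ∈ Finset.Ioc N n, c' k * g k‖ := norm_add_le _ _
      _ ≤ 3 + (2 * L + 4) := add_le_add (hhead N le_rfl) htailbd
      _ ≤ 2 * L + 12 := by linarith
  · -- n < N : the whole sum is a "head"
    have hnN : n ≤ N := le_of_lt (not_le.1 hNn)
    calc ‖∑ k ∈ Finset.Ioc 0 n, c' k * g k‖ ≤ 3 := hhead n hnN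
      _ ≤ 2 * L + 12 := by linarith
end
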